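/- Let F = (v_1 ⊂ ⋯ ⊂ v_n) be a flag in standard form in ℂ^n containing hat vectors: say the hat vectors occur at positions i_k < i_{k-1} < ⋯ < i_1 with v_{i_m} = ê_{j_m} and j_k > j_{k-1} > ⋯ > j_1, and v_p = e_n (so p > i_1), all other v_m being standard basis vectors. Let F̃ be the flag obtained from F by replacing the entry at position i_k by e_n, the entry at position i_m by e_{j_{m+1}} for m = 1,…,k−1, and the entry at position p by e_{j_1}, leaving all other entries unchanged. Then F̃ ∈ B·F, F̃ is fixed by every invertible diagonal matrix, and F̃ is the unique flag in B·F fixed by all of H. -/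

import Mathlib

/-
Common setup.  The ambient space is `ℂ^(n+1)` (so the paper's `n` is our `n + 1`,
and the paper's hypothesis `n ≥ 2` becomes `1 ≤ n`).  Coordinates are indexed by
`Fin (n+1)`, zero-indexed, so the paper's index `i ∈ {1, …, n}` is our `i - 1`,
and the paper's `e_n` is `e (Fin.last n)`.
-/

noncomputable section

namespace ShareshianPairs

/-- The standard basis vector `e i` of `ℂ^(n+1)`. -/
def e (n : ℕ) (i : Fin (n + 1)) : Fin (n + 1) → ℂ := Pi.single i 1

/-- The hat vector `ê j = e j + e n`. -/
def hatE (n : ℕ) (j : Fin (n + 1)) : Fin (n + 1) → ℂ := e n j + e n (Fin.last n)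

/-- The flag `(v 0 ⊂ v 1 ⊂ ⋯)` spanned by a sequence of vectors. -/
def flagOf (n : ℕ) (v : Fin (n + 1) → Fin (n + 1) → ℂ) :
    Fin (n + 1) → Submodule ℂ (Fin (n + 1) → ℂ) :=
  fun i => Submodule.span ℂ (v '' {j | j ≤ i})

/-- A full flag in `ℂ^(n+1)`. -/
def IsFlag (n : ℕ) (V : Fin (n + 1) → Submodule ℂ (Fin (n + 1) → ℂ)) : Prop :=
  Monotone V ∧ ∀ i : Fin (n + 1), Module.finrank ℂ (V i) = (i : ℕ) + 1

/-- The action of `GL(n+1, ℂ)` on flags. -/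
def actFlag (n : ℕ) (g : Matrix.GeneralLinearGroup (Fin (n + 1)) ℂ)
    (V : Fin (n + 1) → Submodule ℂ (Fin (n + 1) → ℂ)) :
    Fin (n + 1) → Submodule ℂ (Fin (n + 1) → ℂ) :=
  fun i => (V i).map (Matrix.mulVecLin (g : Matrix (Fin (n + 1)) (Fin (n + 1)) ℂ))

/-- Membership in the Borel subgroup `B` of invertible upper triangular matrices. -/
def InB (n : ℕ) (g : Matrix.GeneralLinearGroup (Fin (n + 1)) ℂ) : Prop :=
  ∀ i j : Fin (n + 1), j < i → (g : Matrix (Fin (n + 1)) (Fin (n + 1)) ℂ) i j = 0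

/-- Membership in `B_{n-1} ⊂ B` : upper triangular, last diagonal entry `1`,
remaining last-column entries `0`. -/
def InBsmall (n : ℕ) (g : Matrix.GeneralLinearGroup (Fin (n + 1)) ℂ) : Prop :=
  InB n g ∧
    (g : Matrix (Fin (n + 1)) (Fin (n + 1)) ℂ) (Fin.last n) (Fin.last n) = 1 ∧
    ∀ i : Fin (n + 1), i ≠ Fin.last n →
      (g : Matrix (Fin (n + 1)) (Fin (n + 1)) ℂ) i (Fin.last n) = 0

/-- The spanning vectors of the flag `E* = (e_n ⊂ e_1 ⊂ ⋯ ⊂ e_{n-1})`. -/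
def eStarVec (n : ℕ) : Fin (n + 1) → Fin (n + 1) → ℂ :=
  fun i => Fin.cases (e n (Fin.last n)) (fun j => e n j.castSucc) i

/-- Membership in `B*`, the stabilizer of the flag `E*`. -/
def InBstar (n : ℕ) (g : Matrix.GeneralLinearGroup (Fin (n + 1)) ℂ) : Prop :=
  actFlag n g (flagOf n (eStarVec n)) = flagOf n (eStarVec n)

/-- Membership in `H`, the invertible diagonal matrices. -/
def InH (n : ℕ) (g : Matrix.GeneralLinearGroup (Fin (n + 1)) ℂ) : Prop :=
  ∀ i j : Fin (n + 1), i ≠ j → (g : Matrix (Fin (n + 1)) (Fin (n + 1)) ℂ) i j = 0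

/-- The orbit of a flag under the subgroup `{g | P g}`. -/
def orbit (n : ℕ) (P : Matrix.GeneralLinearGroup (Fin (n + 1)) ℂ → Prop)
    (V : Fin (n + 1) → Submodule ℂ (Fin (n + 1) → ℂ)) :
    Set (Fin (n + 1) → Submodule ℂ (Fin (n + 1) → ℂ)) :=
  {W | ∃ g : Matrix.GeneralLinearGroup (Fin (n + 1)) ℂ, P g ∧ W = actFlag n g V}

/-- A sequence of spanning vectors is in standard form. -/
def IsStdForm (n : ℕ) (v : Fin (n + 1) → Fin (n + 1) → ℂ) : Prop :=
  LinearIndependent ℂ v ∧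
  (∀ i, (∃ j, v i = e n j) ∨ (∃ j, j ≠ Fin.last n ∧ v i = hatE n j)) ∧
  (∃ i, v i = e n (Fin.last n)) ∧
  (∀ i k : Fin (n + 1), v i = e n (Fin.last n) → i < k → ∃ j, v k = e n j) ∧
  (∀ i k ji jk : Fin (n + 1), i < k → ji ≠ Fin.last n → jk ≠ Fin.last n →
    v i = hatE n ji → v k = hatE n jk → jk < ji)

/-- `vs` spans the flag `F*` : each hat vector `ê j` of `v` is replaced by `e j`,
all other entries are unchanged. -/
def StarPair (n : ℕ) (v vs : Fin (n + 1) → Fin (n + 1) → ℂ) : Prop :=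
  ∀ q : Fin (n + 1),
    ((∃ t, v q = e n t) → vs q = v q) ∧
    (∀ j : Fin (n + 1), j ≠ Fin.last n → v q = hatE n j → vs q = e n j)

/-- `vt` spans the flag `F̃` attached to the standard-form flag spanned by `v`. -/
def TildePair (n : ℕ) (v vt : Fin (n + 1) → Fin (n + 1) → ℂ) : Prop :=
  ((∀ q, ∃ t, v q = e n t) ∧ vt = v) ∨
  (∃ (k : ℕ) (hk : 0 < k) (i j : Fin k → Fin (n + 1)) (p : Fin (n + 1)),
    StrictAnti i ∧ StrictMono j ∧
    (∀ m : Fin k, j m ≠ Fin.last n ∧ v (i m) = hatE n (j m)) ∧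
    v p = e n (Fin.last n) ∧
    (∀ q : Fin (n + 1), (∀ m : Fin k, q ≠ i m) → ∃ t, v q = e n t) ∧
    vt (i ⟨k - 1, Nat.sub_lt hk Nat.one_pos⟩) = e n (Fin.last n) ∧
    (∀ (m : Fin k) (h : (m : ℕ) + 1 < k), vt (i m) = e n (j ⟨(m : ℕ) + 1, h⟩)) ∧
    vt p = e n (j ⟨0, hk⟩) ∧
    (∀ q : Fin (n + 1), (∀ m : Fin k, q ≠ i m) → q ≠ p → vt q = v q))

/-- The `(n+1)`-cycle `σ`, zero-indexed version of the paper's `σ = (n, n-1, …, 1)`: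
`σ 0 = n` and `σ k = k - 1` for `k ≥ 1`. -/
def sigma (n : ℕ) : Equiv.Perm (Fin (n + 1)) := (finRotate (n + 1))⁻¹

/-- The cycle `τ_Δ = (n, j_k, …, j_2, j_1)` attached to a subset
`Δ = {j_1 < ⋯ < j_k < n} ∪ {n}`:  it sends each element of `Δ` to the next
smaller element (the smallest going back to the largest) and fixes everything else. -/
def tauDelta (n : ℕ) (Δ : Finset (Fin (n + 1))) : Equiv.Perm (Fin (n + 1)) :=
  ((Δ.sort (· ≤ ·)).formPerm)⁻¹

/-- `Δ` is a decreasing sequence for `w⁻¹`. -/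
def IsDecreasingFor (n : ℕ) (Δ : Finset (Fin (n + 1)))
    (w : Equiv.Perm (Fin (n + 1))) : Prop :=
  ∀ x ∈ Δ, ∀ y ∈ Δ, x < y → w⁻¹ y < w⁻¹ x

/-- The spanning vectors of the flag `y(E*)`. -/
def eStarPermVec (n : ℕ) (y : Equiv.Perm (Fin (n + 1))) :
    Fin (n + 1) → Fin (n + 1) → ℂ :=
  fun i => Fin.cases (e n (y (Fin.last n))) (fun t => e n (y t.castSucc)) i

/-- Coxeter length = number of inversions. -/
def len (n : ℕ) (w : Equiv.Perm (Fin (n + 1))) : ℕ :=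
  (Finset.univ.filter
    (fun p : Fin (n + 1) × Fin (n + 1) => p.1 < p.2 ∧ w p.2 < w p.1)).card

/-- Length with respect to the set of simple reflections `S*`. -/
def lenStar (n : ℕ) (x : Equiv.Perm (Fin (n + 1))) : ℕ :=
  len n ((sigma n)⁻¹ * x * sigma n)

/-- Bruhat order on the symmetric group (tableau criterion):
`y ≤ w` iff `#{i ≤ p : y i ≤ q} ≥ #{i ≤ p : w i ≤ q}` for all `p, q`. -/
def bruhatLE (n : ℕ) (y w : Equiv.Perm (Fin (n + 1))) : Prop :=
  ∀ p q : Fin (n + 1),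
    (Finset.univ.filter (fun i => i ≤ p ∧ w i ≤ q)).card ≤
      (Finset.univ.filter (fun i => i ≤ p ∧ y i ≤ q)).card

/-- The total order `n ≺ 1 ≺ 2 ≺ ⋯ ≺ n - 1` (zero-indexed). -/
def precOrd (n : ℕ) (a b : Fin (n + 1)) : Prop :=
  finRotate (n + 1) a < finRotate (n + 1) b

/-- `(w, u*)` is a Shareshian pair. -/
def IsShPair (n : ℕ) (w u : Equiv.Perm (Fin (n + 1))) : Prop :=
  ∃ Δ : Finset (Fin (n + 1)), Fin.last n ∈ Δ ∧ IsDecreasingFor n Δ w ∧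
    u = tauDelta n Δ * w * (sigma n)⁻¹

/-- The matrix whose `i`-th column is `v i`. -/
def colMat (n : ℕ) (v : Fin (n + 1) → Fin (n + 1) → ℂ) :
    Matrix (Fin (n + 1)) (Fin (n + 1)) ℂ :=
  Matrix.of fun r c => v c r

/-- The double coset `{b₁ * g * b₂ | P b₁, Q b₂}` as a set of matrices. -/
def dblCoset (n : ℕ) (P Q : Matrix.GeneralLinearGroup (Fin (n + 1)) ℂ → Prop)
    (g : Matrix (Fin (n + 1)) (Fin (n + 1)) ℂ) :
    Set (Matrix (Fin (n + 1)) (Fin (n + 1)) ℂ) :=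
  {x | ∃ b₁ b₂ : Matrix.GeneralLinearGroup (Fin (n + 1)) ℂ, P b₁ ∧ Q b₂ ∧
    x = (b₁ : Matrix (Fin (n + 1)) (Fin (n + 1)) ℂ) * g *
      (b₂ : Matrix (Fin (n + 1)) (Fin (n + 1)) ℂ)}

/-- The coordinate subspace `E_q = span {e_1, …, e_q}`. -/
def Esub (n : ℕ) (q : ℕ) : Submodule ℂ (Fin (n + 1) → ℂ) :=
  Submodule.span ℂ (e n '' {t : Fin (n + 1) | (t : ℕ) < q})

/-- The line `L = ℂ e_n`. -/
def Lline (n : ℕ) : Submodule ℂ (Fin (n + 1) → ℂ) :=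
  Submodule.span ℂ {e n (Fin.last n)}


/-!
An invertible diagonal matrix preserves a subspace only if the subspace is spanned by the
standard basis vectors it contains. Such a coordinate subspace `U` is determined by the numbers
`dim (U ∩ E_r)`, and these are the same along a `B`-orbit because `B` fixes every `E_r`; hence a
`B`-orbit contains at most one `H`-fixed flag. The flag `F̃` is spanned by standard basis vectors,
so it is `H`-fixed, and an explicit upper unitriangular matrix, built from
`Δ = {j_1, …, j_k, n}`, sends each `v_q` into `F̃_q`, hence carries `F` onto `F̃`.
-/

open Matrix Module

variable {n : ℕ}

local notation "Vec" => Fin (n + 1) → ℂ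

local notation "Mat" => Matrix (Fin (n + 1)) (Fin (n + 1)) ℂ

lemma mulVec_e (M : Mat) (t : Fin (n + 1)) :
    M *ᵥ e n t = fun r => M r t := by
  ext r; simp [e]

lemma mem_span_e_image {S : Set (Fin (n + 1))} {x : Vec} :
    x ∈ Submodule.span ℂ (e n '' S) ↔ ∀ t, x t ≠ 0 → t ∈ S := by
  have he : e n = ⇑(Pi.basisFun ℂ (Fin (n + 1))) :=
    funext fun t => (Pi.basisFun_apply ℂ _ t).symm
  rw [he, Module.Basis.mem_span_image]
  simp [Set.subset_def]

lemma mulVecLin_injective (g : GL (Fin (n + 1)) ℂ) : Function.Injective (mulVecLin (g : Mat)) :=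
  mulVec_injective_iff_isUnit.2 g.isUnit

lemma finrank_map_mulVecLin (g : GL (Fin (n + 1)) ℂ) (U : Submodule ℂ Vec) :
    finrank ℂ (U.map (mulVecLin (g : Mat))) = finrank ℂ U :=
  (Submodule.equivMapOfInjective _ (mulVecLin_injective g) U).finrank_eq.symm

def IsHStable (U : Submodule ℂ Vec) : Prop :=
  ∀ h : GL (Fin (n + 1)) ℂ, InH n h → ∀ x ∈ U, (h : Mat) *ᵥ x ∈ U

lemma IsHStable.smul_e_mem {U : Submodule ℂ Vec} (hU : IsHStable U) {x : Vec} (hx : x ∈ U)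
    (t : Fin (n + 1)) : x t • e n t ∈ U := by
  set d : Fin (n + 1) → ℂ := Function.update 1 t 2
  have hdet : (diagonal d).det ≠ 0 := by
    rw [det_diagonal, Finset.prod_ne_zero_iff]
    intro s _
    by_cases hs : s = t <;> simp [d, hs]
  let h : GL (Fin (n + 1)) ℂ := GeneralLinearGroup.mkOfDetNeZero _ hdet
  have hH : InH n h := fun _ _ hab => diagonal_apply_ne d hab
  have hsub : (h : Mat) *ᵥ x - x = x t • e n t := by
    ext s
    by_cases hs : s = t
    · subst hs; simp [h, d, e, mulVec_diagonal]; ring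
    · simp [h, d, e, mulVec_diagonal, hs]
  rw [← hsub]
  exact U.sub_mem (hU h hH x hx) hx

lemma IsHStable.eq_span_e {U : Submodule ℂ Vec} (hU : IsHStable U) :
    U = Submodule.span ℂ (e n '' {t | e n t ∈ U}) := by
  refine le_antisymm (fun x hx => mem_span_e_image.2 fun t hxt => ?_) ?_
  · have := U.smul_mem (x t)⁻¹ (hU.smul_e_mem hx t)
    rwa [smul_smul, inv_mul_cancel₀ hxt, one_smul] at this
  · rw [Submodule.span_le]
    rintro _ ⟨t, ht, rfl⟩
    exact ht

lemma mem_Esub {r : ℕ} {x : Vec} : x ∈ Esub n r ↔ ∀ t, x t ≠ 0 → (t : ℕ) < r :=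
  mem_span_e_image

lemma map_Esub_of_InB {b : GL (Fin (n + 1)) ℂ} (hb : InB n b) (r : ℕ) :
    (Esub n r).map (mulVecLin (b : Mat)) = Esub n r := by
  refine Submodule.eq_of_le_of_finrank_eq ?_ (finrank_map_mulVecLin b _)
  rw [Esub, Submodule.map_span_le]
  rintro _ ⟨t, ht, rfl⟩
  rw [mulVecLin_apply, mulVec_e, ← Esub, mem_Esub]
  intro s hs
  by_contra! hrs
  exact hs (hb s t (Fin.lt_def.2 (lt_of_lt_of_le ht hrs)))

lemma finrank_map_inf_Esub {b : GL (Fin (n + 1)) ℂ} (hb : InB n b)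
    (U : Submodule ℂ Vec) (r : ℕ) :
    finrank ℂ ↥(U.map (mulVecLin (b : Mat)) ⊓ Esub n r) =
      finrank ℂ ↥(U ⊓ Esub n r) := by
  conv_lhs => rw [← map_Esub_of_InB hb r, ← Submodule.map_inf _ (mulVecLin_injective b)]
  exact finrank_map_mulVecLin b _

lemma mem_iff_finrank_span_e_inf_Esub_lt (S : Set (Fin (n + 1))) (t : Fin (n + 1)) :
    t ∈ S ↔ finrank ℂ ↥(Submodule.span ℂ (e n '' S) ⊓ Esub n t) <
      finrank ℂ ↥(Submodule.span ℂ (e n '' S) ⊓ Esub n (t + 1)) := by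
  have hmono : Esub n t ≤ Esub n (t + 1) :=
    Submodule.span_mono (Set.image_mono fun s (hs : (s : ℕ) < t) => Nat.lt_succ_of_lt hs)
  constructor
  · intro ht
    apply Submodule.finrank_lt_finrank_of_lt
    refine SetLike.lt_iff_le_and_exists.2 ⟨inf_le_inf_left _ hmono, e n t, ?_, ?_⟩
    · exact ⟨Submodule.subset_span ⟨t, ht, rfl⟩,
        Submodule.subset_span ⟨t, Nat.lt_succ_self _, rfl⟩⟩
    · exact fun h => lt_irrefl (t : ℕ) (mem_Esub.1 h.2 t (by simp [e]))
  · intro hlt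
    by_contra ht
    refine hlt.not_ge
      (Submodule.finrank_mono fun x ⟨hxS, hxE⟩ => ⟨hxS, mem_Esub.2 fun s hs => ?_⟩)
    have hsS := mem_span_e_image.1 hxS s hs
    exact lt_of_le_of_ne (Nat.le_of_lt_succ (mem_Esub.1 hxE s hs))
      fun h => ht (Fin.ext h ▸ hsS)

lemma IsHStable.mem_iff_finrank_inf_Esub_lt {U : Submodule ℂ Vec} (hU : IsHStable U)
    (t : Fin (n + 1)) :
    e n t ∈ U ↔ finrank ℂ ↥(U ⊓ Esub n t) < finrank ℂ ↥(U ⊓ Esub n (t + 1)) := by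
  conv_rhs => rw [hU.eq_span_e]
  exact mem_iff_finrank_span_e_inf_Esub_lt {t | e n t ∈ U} t

lemma IsHStable.eq_of_finrank_inf_Esub {U U' : Submodule ℂ Vec} (hU : IsHStable U)
    (hU' : IsHStable U')
    (h : ∀ r, finrank ℂ ↥(U ⊓ Esub n r) = finrank ℂ ↥(U' ⊓ Esub n r)) :
    U = U' := by
  rw [hU.eq_span_e, hU'.eq_span_e]
  congr 2
  ext t
  rw [Set.mem_ofPred_eq, Set.mem_ofPred_eq, hU.mem_iff_finrank_inf_Esub_lt,
    hU'.mem_iff_finrank_inf_Esub_lt, h, h]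

lemma isHStable_of_Hfixed {W : Fin (n + 1) → Submodule ℂ Vec}
    (hW : ∀ h : GL (Fin (n + 1)) ℂ, InH n h → actFlag n h W = W) (q : Fin (n + 1)) :
    IsHStable (W q) := fun h hH x hx => by
  rw [← hW h hH]
  exact Submodule.mem_map_of_mem hx

lemma eq_of_Hfixed_of_mem_orbit {V W W' : Fin (n + 1) → Submodule ℂ Vec}
    (hW : W ∈ orbit n (InB n) V) (hW' : W' ∈ orbit n (InB n) V)
    (hfix : ∀ h : GL (Fin (n + 1)) ℂ, InH n h → actFlag n h W = W)
    (hfix' : ∀ h : GL (Fin (n + 1)) ℂ, InH n h → actFlag n h W' = W') :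
    W = W' := by
  funext q
  refine (isHStable_of_Hfixed hfix q).eq_of_finrank_inf_Esub (isHStable_of_Hfixed hfix' q)
    fun r => ?_
  obtain ⟨b, hb, rfl⟩ := hW
  obtain ⟨b', hb', rfl⟩ := hW'
  exact (finrank_map_inf_Esub hb _ r).trans (finrank_map_inf_Esub hb' _ r).symm

lemma flagOf_mono (u : Fin (n + 1) → Vec) : Monotone (flagOf n u) :=
  fun _ _ hqr => Submodule.span_mono (Set.image_mono fun _ hs => le_trans hs hqr)

lemma finrank_flagOf_le (u : Fin (n + 1) → Vec) (q : Fin (n + 1)) :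
    finrank ℂ ↥(flagOf n u q) ≤ q + 1 := by
  have := finrank_range_le_card (R := ℂ) fun s : Set.Iic q => u s
  rwa [← Set.image_eq_range, ← Set.toFinset_card, Set.toFinset_Iic, Fin.card_Iic] at this

lemma finrank_flagOf {v : Fin (n + 1) → Vec} (hv : LinearIndependent ℂ v)
    (q : Fin (n + 1)) : finrank ℂ ↥(flagOf n v q) = q + 1 := by
  have := finrank_span_eq_card (hv.comp (Subtype.val : Set.Iic q → _) Subtype.val_injective)
  rwa [Function.comp_def, ← Set.image_eq_range, ← Set.toFinset_card, Set.toFinset_Iic,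
    Fin.card_Iic] at this

lemma actFlag_flagOf_eq_of_mulVec_mem {g : GL (Fin (n + 1)) ℂ}
    {v u : Fin (n + 1) → Vec} (hv : LinearIndependent ℂ v)
    (hg : ∀ q, (g : Mat) *ᵥ v q ∈ flagOf n u q) : actFlag n g (flagOf n v) = flagOf n u := by
  funext q
  refine Submodule.eq_of_le_of_finrank_le ?_ ?_
  · rw [actFlag, flagOf, Submodule.map_span_le]
    rintro _ ⟨q', hq', rfl⟩
    exact flagOf_mono u hq' (hg q')
  · rw [actFlag, finrank_map_mulVecLin, finrank_flagOf hv]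
    exact finrank_flagOf_le u q

lemma mulVec_e_of_InH {h : GL (Fin (n + 1)) ℂ} (hH : InH n h) (t : Fin (n + 1)) :
    (h : Mat) *ᵥ e n t = (h : Mat) t t • e n t := by
  ext r
  by_cases hr : r = t
  · subst hr; simp [e]
  · simp [e, hr, hH r t hr]

lemma actFlag_flagOf_of_InH {u : Fin (n + 1) → Vec} (hu : ∀ q, ∃ t, u q = e n t)
    {h : GL (Fin (n + 1)) ℂ} (hH : InH n h) : actFlag n h (flagOf n u) = flagOf n u := by
  funext q
  refine Submodule.eq_of_le_of_finrank_eq ?_ (finrank_map_mulVecLin h _)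
  rw [actFlag, flagOf, Submodule.map_span_le]
  rintro _ ⟨q', hq', rfl⟩
  obtain ⟨t, ht⟩ := hu q'
  rw [mulVecLin_apply, ht, mulVec_e_of_InH hH, ← ht]
  exact Submodule.smul_mem _ _ (Submodule.subset_span ⟨q', hq', rfl⟩)

/-- Its columns are `e_s` for `s ∉ Δ`, `∑_{r ∈ Δ, r ≤ s} e_r` for `s ∈ Δ \ {n}`, and
`e_n - ∑_{r ∈ Δ, r < n} e_r`. -/
def tildeMatrix (Δ : Finset (Fin (n + 1))) : Mat :=
  Matrix.of fun r s =>
    if r = s then 1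
    else if r ∈ Δ ∧ s ∈ Δ ∧ r < s then (if s = Fin.last n then -1 else 1)
    else 0

lemma tildeMatrix_isUpperTriangular (Δ : Finset (Fin (n + 1))) :
    (tildeMatrix Δ).IsUpperTriangular := fun r s (hsr : s < r) => by
  simp [tildeMatrix, hsr.ne', hsr.not_gt]

lemma det_tildeMatrix (Δ : Finset (Fin (n + 1))) : (tildeMatrix Δ).det = 1 := by
  rw [det_of_isUpperTriangular (tildeMatrix_isUpperTriangular Δ)]
  simp [tildeMatrix]

def tildeGL (Δ : Finset (Fin (n + 1))) : GL (Fin (n + 1)) ℂ :=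
  GeneralLinearGroup.mkOfDetNeZero (tildeMatrix Δ) (by simp [det_tildeMatrix])

lemma coe_tildeGL (Δ : Finset (Fin (n + 1))) : (tildeGL Δ : Mat) = tildeMatrix Δ :=
  rfl

lemma inB_tildeGL (Δ : Finset (Fin (n + 1))) : InB n (tildeGL Δ) :=
  tildeMatrix_isUpperTriangular Δ

lemma tildeMatrix_mulVec_e_of_notMem {Δ : Finset (Fin (n + 1))} {t : Fin (n + 1)} (ht : t ∉ Δ) :
    tildeMatrix Δ *ᵥ e n t = e n t := by
  ext r
  by_cases hr : r = t
  · subst hr; simp [tildeMatrix, e]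
  · simp [tildeMatrix, e, hr, ht]

lemma tildeMatrix_mulVec_e_last_mem {Δ : Finset (Fin (n + 1))} (hΔ : Fin.last n ∈ Δ) :
    tildeMatrix Δ *ᵥ e n (Fin.last n) ∈ Submodule.span ℂ (e n '' Δ) := by
  rw [mem_span_e_image, mulVec_e]
  intro r hr
  by_contra hrΔ
  simp_all [tildeMatrix, ne_of_mem_of_not_mem hΔ hrΔ |>.symm]

lemma tildeMatrix_mulVec_hatE_mem {Δ : Finset (Fin (n + 1))} (hΔ : Fin.last n ∈ Δ)
    {j : Fin (n + 1)} (hj : j ∈ Δ) (hjn : j ≠ Fin.last n) :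
    tildeMatrix Δ *ᵥ hatE n j ∈ Submodule.span ℂ (e n '' {r | r ∈ Δ ∧ j < r}) := by
  rw [mem_span_e_image, hatE, mulVec_add, mulVec_e, mulVec_e]
  intro r hr
  by_contra hrΔ
  have hjn' : j < Fin.last n := lt_of_le_of_ne (Fin.le_last j) hjn
  apply hr
  by_cases hrD : r ∈ Δ
  · have hrj : r ≤ j := not_lt.1 fun h => hrΔ ⟨hrD, h⟩
    have hrn : r < Fin.last n := lt_of_le_of_lt hrj hjn'
    rcases hrj.lt_or_eq with hrj | rfl
    · simp [tildeMatrix, hrj, hrj.ne, hrn, hrn.ne, hrD, hj, hΔ, hjn]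
    · simp [tildeMatrix, hrn, hrn.ne, hrD, hΔ]
  · simp [tildeMatrix, ne_of_mem_of_not_mem hj hrD |>.symm, ne_of_mem_of_not_mem hΔ hrD |>.symm,
      hrD]

lemma hatE_ne_e {j : Fin (n + 1)} (hj : j ≠ Fin.last n) (t : Fin (n + 1)) :
    hatE n j ≠ e n t := by
  intro h
  have hj' := congrFun h j
  have hn' := congrFun h (Fin.last n)
  simp only [hatE, e, Pi.add_apply, Pi.single_apply] at hj' hn'
  split_ifs at hj' hn' <;> simp_all

lemma span_e_image_le_flagOf {S : Set (Fin (n + 1))} {u : Fin (n + 1) → Vec}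
    {q : Fin (n + 1)} (h : ∀ r ∈ S, ∃ q' ≤ q, u q' = e n r) :
    Submodule.span ℂ (e n '' S) ≤ flagOf n u q := by
  rw [Submodule.span_le]
  rintro _ ⟨r, hr, rfl⟩
  obtain ⟨q', hq', hu⟩ := h r hr
  exact Submodule.subset_span ⟨q', hq', hu⟩

lemma self_mem_flagOf (u : Fin (n + 1) → Vec) (q : Fin (n + 1)) : u q ∈ flagOf n u q :=
  Submodule.subset_span ⟨q, le_refl q, rfl⟩

def hatIndices {k : ℕ} (j : Fin k → Fin (n + 1)) : Finset (Fin (n + 1)) :=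
  insert (Fin.last n) (Finset.univ.image j)

section StandardForm

variable {k : ℕ} {i j : Fin k → Fin (n + 1)} {p : Fin (n + 1)}
  {v vt : Fin (n + 1) → Fin (n + 1) → ℂ}

lemma hat_pos_lt (hstd : IsStdForm n v)
    (hhat : ∀ m : Fin k, j m ≠ Fin.last n ∧ v (i m) = hatE n (j m))
    (hp : v p = e n (Fin.last n)) (m : Fin k) : i m < p := by
  rcases lt_trichotomy (i m) p with h | rfl | h
  · exact h
  · exact absurd ((hhat m).2.symm.trans hp) (hatE_ne_e (hhat m).1 _)
  · obtain ⟨-, -, -, hstd_after_last, -⟩ := hstd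
    obtain ⟨t, ht⟩ := hstd_after_last p (i m) hp h
    exact absurd ((hhat m).2.symm.trans ht) (hatE_ne_e (hhat m).1 t)

lemma notMem_hatIndices (hv : LinearIndependent ℂ v)
    (hhat : ∀ m : Fin k, j m ≠ Fin.last n ∧ v (i m) = hatE n (j m))
    (hp : v p = e n (Fin.last n)) {q : Fin (n + 1)} (hqi : ∀ m, q ≠ i m) (hqp : q ≠ p)
    {t : Fin (n + 1)} (ht : v q = e n t) : t ∉ hatIndices j := by
  simp only [hatIndices, Finset.mem_insert, Finset.mem_image, Finset.mem_univ, true_and, not_or,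
    not_exists]
  refine ⟨fun htn => hqp (hv.injective (by rw [ht, hp, htn])), fun m hmt => ?_⟩
  have hsum : v (i m) ∈ Submodule.span ℂ (v '' {q, p}) := by
    rw [(hhat m).2, hatE, hmt, ← ht, ← hp, Set.image_pair]
    exact Submodule.add_mem _ (Submodule.subset_span (by simp)) (Submodule.subset_span (by simp))
  refine hv.notMem_span_image ?_ hsum
  rintro (h | h)
  · exact hqi m h.symm
  · exact hatE_ne_e (hhat m).1 _ ((hhat m).2.symm.trans (h ▸ hp))

lemma exists_tilde_pos (hk : 0 < k) (hi : StrictAnti i) (hj : StrictMono j)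
    (hip : ∀ m, i m < p)
    (ht1 : vt (i ⟨k - 1, Nat.sub_lt hk Nat.one_pos⟩) = e n (Fin.last n))
    (ht2 : ∀ (m : Fin k) (h : (m : ℕ) + 1 < k), vt (i m) = e n (j ⟨(m : ℕ) + 1, h⟩))
    (ht3 : vt p = e n (j ⟨0, hk⟩)) {r : Fin (n + 1)} (hr : r ∈ hatIndices j) :
    ∃ q ≤ p, vt q = e n r ∧ ∀ m, j m < r → q ≤ i m := by
  simp only [hatIndices, Finset.mem_insert, Finset.mem_image, Finset.mem_univ, true_and] at hr
  rcases hr with rfl | ⟨⟨_ | m, hm⟩, rfl⟩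
  · exact ⟨_, (hip _).le, ht1, fun m _ =>
      hi.antitone (Fin.le_def.2 (Nat.le_sub_one_of_lt m.2))⟩
  · exact ⟨p, le_rfl, ht3, fun m hm => (Nat.not_lt_zero _ (hj.lt_iff_lt.1 hm)).elim⟩
  · exact ⟨i ⟨m, by omega⟩, (hip _).le, ht2 _ hm, fun m' hm' =>
      hi.antitone (Fin.le_def.2 (Nat.le_of_lt_succ (hj.lt_iff_lt.1 hm')))⟩

lemma tildeGL_mulVec_mem_flagOf (hv : LinearIndependent ℂ v) (hk : 0 < k) (hi : StrictAnti i)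
    (hj : StrictMono j) (hhat : ∀ m : Fin k, j m ≠ Fin.last n ∧ v (i m) = hatE n (j m))
    (hp : v p = e n (Fin.last n)) (hip : ∀ m, i m < p)
    (hrest : ∀ q : Fin (n + 1), (∀ m : Fin k, q ≠ i m) → ∃ t, v q = e n t)
    (ht1 : vt (i ⟨k - 1, Nat.sub_lt hk Nat.one_pos⟩) = e n (Fin.last n))
    (ht2 : ∀ (m : Fin k) (h : (m : ℕ) + 1 < k), vt (i m) = e n (j ⟨(m : ℕ) + 1, h⟩))
    (ht3 : vt p = e n (j ⟨0, hk⟩))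
    (ht4 : ∀ q : Fin (n + 1), (∀ m : Fin k, q ≠ i m) → q ≠ p → vt q = v q)
    (q : Fin (n + 1)) :
    (tildeGL (hatIndices j) : Mat) *ᵥ v q ∈ flagOf n vt q := by
  have hpos := fun r (hr : r ∈ hatIndices j) => exists_tilde_pos hk hi hj hip ht1 ht2 ht3 hr
  have hΔ : Fin.last n ∈ hatIndices j := Finset.mem_insert_self _ _
  rw [coe_tildeGL]
  by_cases hqi : ∃ m, q = i m
  · obtain ⟨m, rfl⟩ := hqi
    have hjm : j m ∈ hatIndices j :=
      Finset.mem_insert_of_mem (Finset.mem_image_of_mem j (Finset.mem_univ m))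
    rw [(hhat m).2]
    refine span_e_image_le_flagOf (fun r hr => ?_) (tildeMatrix_mulVec_hatE_mem hΔ hjm (hhat m).1)
    obtain ⟨q', -, hq', hq'i⟩ := hpos r hr.1
    exact ⟨q', hq'i m hr.2, hq'⟩
  by_cases hqp : q = p
  · subst hqp
    rw [hp]
    exact span_e_image_le_flagOf (fun r hr => (hpos r hr).imp fun _ h => ⟨h.1, h.2.1⟩)
      (tildeMatrix_mulVec_e_last_mem hΔ)
  push Not at hqi
  obtain ⟨t, ht⟩ := hrest q hqi
  rw [ht, tildeMatrix_mulVec_e_of_notMem (notMem_hatIndices hv hhat hp hqi hqp ht), ← ht,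
    ← ht4 q hqi hqp]
  exact self_mem_flagOf vt q

lemma exists_eq_e_of_tilde (hk : 0 < k)
    (hrest : ∀ q : Fin (n + 1), (∀ m : Fin k, q ≠ i m) → ∃ t, v q = e n t)
    (ht1 : vt (i ⟨k - 1, Nat.sub_lt hk Nat.one_pos⟩) = e n (Fin.last n))
    (ht2 : ∀ (m : Fin k) (h : (m : ℕ) + 1 < k), vt (i m) = e n (j ⟨(m : ℕ) + 1, h⟩))
    (ht3 : vt p = e n (j ⟨0, hk⟩))
    (ht4 : ∀ q : Fin (n + 1), (∀ m : Fin k, q ≠ i m) → q ≠ p → vt q = v q)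
    (q : Fin (n + 1)) :
    ∃ t, vt q = e n t := by
  by_cases hqi : ∃ m, q = i m
  · obtain ⟨m, rfl⟩ := hqi
    by_cases hm : (m : ℕ) + 1 < k
    · exact ⟨_, ht2 m hm⟩
    · obtain rfl : m = ⟨k - 1, Nat.sub_lt hk Nat.one_pos⟩ := Fin.ext (by simp; omega)
      exact ⟨_, ht1⟩
  by_cases hqp : q = p
  · exact ⟨_, hqp ▸ ht3⟩
  push Not at hqi
  rw [ht4 q hqi hqp]
  exact hrest q hqi

end StandardForm

/-- `m : Fin k` encodes the paper's index `m + 1 ∈ {1, …, k}`. -/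
theorem statement2_general (n : ℕ) (v vt : Fin (n + 1) → Fin (n + 1) → ℂ)
    (hstd : IsStdForm n v)
    (k : ℕ) (hk : 0 < k) (i j : Fin k → Fin (n + 1)) (p : Fin (n + 1))
    (hi : StrictAnti i) (hj : StrictMono j)
    (hhat : ∀ m : Fin k, j m ≠ Fin.last n ∧ v (i m) = hatE n (j m))
    (hp : v p = e n (Fin.last n))
    (hrest : ∀ q : Fin (n + 1), (∀ m : Fin k, q ≠ i m) → ∃ t, v q = e n t)
    (ht1 : vt (i ⟨k - 1, Nat.sub_lt hk Nat.one_pos⟩) = e n (Fin.last n))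
    (ht2 : ∀ (m : Fin k) (h : (m : ℕ) + 1 < k), vt (i m) = e n (j ⟨(m : ℕ) + 1, h⟩))
    (ht3 : vt p = e n (j ⟨0, hk⟩))
    (ht4 : ∀ q : Fin (n + 1), (∀ m : Fin k, q ≠ i m) → q ≠ p → vt q = v q) :
    flagOf n vt ∈ orbit n (InB n) (flagOf n v) ∧
    (∀ h : Matrix.GeneralLinearGroup (Fin (n + 1)) ℂ, InH n h →
      actFlag n h (flagOf n vt) = flagOf n vt) ∧
    (∀ W ∈ orbit n (InB n) (flagOf n v),
      (∀ h : Matrix.GeneralLinearGroup (Fin (n + 1)) ℂ, InH n h → actFlag n h W = W) →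
        W = flagOf n vt) := by
  have hip := hat_pos_lt hstd hhat hp
  have horbit : flagOf n vt ∈ orbit n (InB n) (flagOf n v) :=
    ⟨tildeGL (hatIndices j), inB_tildeGL _, (actFlag_flagOf_eq_of_mulVec_mem hstd.1
      (tildeGL_mulVec_mem_flagOf hstd.1 hk hi hj hhat hp hip hrest ht1 ht2 ht3 ht4)).symm⟩
  have hfix : ∀ h : GL (Fin (n + 1)) ℂ, InH n h → actFlag n h (flagOf n vt) = flagOf n vt :=
    fun _ hH => actFlag_flagOf_of_InH (exists_eq_e_of_tilde hk hrest ht1 ht2 ht3 ht4) hH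
  exact ⟨horbit, hfix, fun W hW hfixW => eq_of_Hfixed_of_mem_orbit hW horbit hfixW hfix⟩

/-- for a standard-form flag `F` with hat vectors (at positions
`i_k < ⋯ < i_1`, hat indices `j_1 < ⋯ < j_k`, `e_n` at position `p`), the flag `F̃`
(obtained by replacing position `i_k` by `e_n`, position `i_m` by `e_{j_{m+1}}` for
`m = 1, …, k-1`, and position `p` by `e_{j_1}`) lies in `B·F`, is fixed by every
invertible diagonal matrix, and is the unique `H`-fixed flag in `B·F`.
(Here `m : Fin k` encodes the paper's index `m + 1 ∈ {1, …, k}`.) -/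
theorem statement2 (n : ℕ) (hn : 1 ≤ n) (v vt : Fin (n + 1) → Fin (n + 1) → ℂ)
    (hstd : IsStdForm n v)
    (k : ℕ) (hk : 0 < k) (i j : Fin k → Fin (n + 1)) (p : Fin (n + 1))
    (hi : StrictAnti i) (hj : StrictMono j)
    (hhat : ∀ m : Fin k, j m ≠ Fin.last n ∧ v (i m) = hatE n (j m))
    (hp : v p = e n (Fin.last n))
    (hrest : ∀ q : Fin (n + 1), (∀ m : Fin k, q ≠ i m) → ∃ t, v q = e n t)
    (ht1 : vt (i ⟨k - 1, Nat.sub_lt hk Nat.one_pos⟩) = e n (Fin.last n))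
    (ht2 : ∀ (m : Fin k) (h : (m : ℕ) + 1 < k), vt (i m) = e n (j ⟨(m : ℕ) + 1, h⟩))
    (ht3 : vt p = e n (j ⟨0, hk⟩))
    (ht4 : ∀ q : Fin (n + 1), (∀ m : Fin k, q ≠ i m) → q ≠ p → vt q = v q) :
    flagOf n vt ∈ orbit n (InB n) (flagOf n v) ∧
    (∀ h : Matrix.GeneralLinearGroup (Fin (n + 1)) ℂ, InH n h →
      actFlag n h (flagOf n vt) = flagOf n vt) ∧
    (∀ W ∈ orbit n (InB n) (flagOf n v),
      (∀ h : Matrix.GeneralLinearGroup (Fin (n + 1)) ℂ, InH n h → actFlag n h W = W) →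
        W = flagOf n vt) :=
  statement2_general n v vt hstd k hk i j p hi hj hhat hp hrest ht1 ht2 ht3 ht4

end ShareshianPairs
end
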